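/- arXiv:1803.06988 — 2 statements merged into one kernel-verified Lean document; each statement's English description precedes it below -/
import Mathlib

section
/- If 𝔰₁ and 𝔰₂ are ideals of a finite-dimensional solvable Lie algebra 𝔤 over ℝ such that for every X ∈ 𝔰₁ and every X ∈ 𝔰₂ the operator ad X : 𝔤 → 𝔤 has only real eigenvalues, then for every X ∈ 𝔰₁ + 𝔰₂ the operator ad X has only real eigenvalues. -/
/-- A real-linear endomorphism has only real eigenvalues, computed on the
complexification. -/
def HasOnlyRealEigenvalues {V : Type*} [AddCommGroup V] [Module ℝ V]
    (f : V →ₗ[ℝ] V) : Prop :=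
  ∀ μ : ℂ, Module.End.HasEigenvalue (LinearMap.baseChange ℂ f) μ → μ.im = 0

/-!
Complexify. By Lie's theorem, applied repeatedly to successive quotients of the adjoint module of
the solvable complex Lie algebra `ℂ ⊗ 𝔤`, every eigenvalue of `ad X` is `χ X` for some linear
functional `χ` such that `χ Y` is an eigenvalue of `ad Y` for every `Y`. Writing `X = X₁ + X₂`
with `Xᵢ ∈ 𝔰ᵢ`, an eigenvalue of `ad X` is then `χ X₁ + χ X₂`, a sum of two real numbers.
-/

open Module TensorProduct

theorem Module.End.HasEigenvalue.of_comp_eq_of_surjective {K V W : Type*} [Field K]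
    [AddCommGroup V] [Module K V] [FiniteDimensional K V]
    [AddCommGroup W] [Module K W] [FiniteDimensional K W]
    {f : End K V} {g : End K W} {π : V →ₗ[K] W} (hπ : Function.Surjective π)
    (hfg : g ∘ₗ π = π ∘ₗ f) {μ : K} (hg : g.HasEigenvalue μ) : f.HasEigenvalue μ := by
  contrapose hg
  rw [End.hasEigenvalue_iff, not_not, End.eigenspace_def, LinearMap.ker_eq_bot,
    LinearMap.injective_iff_surjective] at hg ⊢
  have hcomm : (g - μ • 1) ∘ₗ π = π ∘ₗ (f - μ • 1) := by
    ext v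
    simpa using LinearMap.congr_fun hfg v
  exact Function.Surjective.of_comp (g := π) (by
    rw [← LinearMap.coe_comp, hcomm, LinearMap.coe_comp]
    exact hπ.comp hg)

namespace LieModule

variable {k L : Type*} [Field k] [IsAlgClosed k] [CharZero k] [LieRing L] [LieAlgebra k L]
  [LieAlgebra.IsSolvable L]

/-- An eigenvector of `x` either lies in the common eigenspace provided by Lie's theorem, or
survives in the quotient by it, whose eigenvalues are eigenvalues on `V`. -/
theorem exists_dual_apply_eq_of_hasEigenvalue (V : Type*) [AddCommGroup V] [Module k V]
    [FiniteDimensional k V] [LieRingModule L V] [LieModule k L V] {x : L} {μ : k}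
    (h : (toEnd k L V x).HasEigenvalue μ) :
    ∃ χ : Dual k L, χ x = μ ∧ ∀ y, (toEnd k L V y).HasEigenvalue (χ y) := by
  obtain ⟨u, hu⟩ := h.exists_hasEigenvector
  have : Nontrivial V := ⟨u, 0, hu.2⟩
  obtain ⟨χ₀, hχ₀⟩ := exists_nontrivial_weightSpace_of_isSolvable k L V
  set W := weightSpace V χ₀
  have hW_eig : ∀ y, (toEnd k L V y).HasEigenvalue (χ₀ y) := by
    obtain ⟨w, hw⟩ := exists_ne (0 : W)
    exact fun y => End.hasEigenvalue_of_hasEigenvector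
      ⟨End.mem_eigenspace_iff.2 ((mem_weightSpace χ₀ (w : V)).1 w.2 y), by simpa using hw⟩
  by_cases huW : u ∈ W
  · refine ⟨χ₀, smul_left_injective k hu.2 ?_, hW_eig⟩
    show χ₀ x • u = μ • u
    rw [← (mem_weightSpace χ₀ u).1 huW x]
    exact hu.apply_eq_smul
  · have hq : (toEnd k L (V ⧸ W) x).HasEigenvalue μ :=
      End.hasEigenvalue_of_hasEigenvector (x := LieSubmodule.Quotient.mk' W u)
        ⟨End.mem_eigenspace_iff.2 (by
          simpa using congr(LieSubmodule.Quotient.mk' W $(hu.apply_eq_smul))), by simpa using huW⟩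
    obtain ⟨χ, hχx, hχ⟩ := exists_dual_apply_eq_of_hasEigenvalue (V ⧸ W) hq
    exact ⟨χ, hχx, fun y => (hχ y).of_comp_eq_of_surjective
      (LieSubmodule.Quotient.surjective_mk' W) (LieSubmodule.Quotient.toEnd_comp_mk' W y)⟩
termination_by finrank k V
decreasing_by
  have : Nontrivial (W : Submodule k V) := hχ₀
  have := (W : Submodule k V).finrank_quotient_add_finrank
  have : 0 < finrank k (W : Submodule k V) := finrank_pos
  exact (by omega : finrank k (V ⧸ (W : Submodule k V)) < finrank k V)

theorem exists_hasEigenvalue_add {V : Type*} [AddCommGroup V] [Module k V]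
    [FiniteDimensional k V] [LieRingModule L V] [LieModule k L V] {x y : L} {μ : k}
    (h : (toEnd k L V (x + y)).HasEigenvalue μ) :
    ∃ a b, (toEnd k L V x).HasEigenvalue a ∧ (toEnd k L V y).HasEigenvalue b ∧ a + b = μ := by
  obtain ⟨χ, hχ, hχ_eig⟩ := exists_dual_apply_eq_of_hasEigenvalue V h
  exact ⟨χ x, χ y, hχ_eig x, hχ_eig y, by rw [← map_add, hχ]⟩

end LieModule

open LieModule in
/-- The sum of two completely solvable ideals of a finite-dimensional real solvable
Lie algebra is completely solvable: if `ad X` has only real eigenvalues for all `X`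
in each of the two ideals, the same holds for all `X` in their sum. -/
theorem sum_of_completely_solvable_ideals {𝔤 : Type*} [LieRing 𝔤] [LieAlgebra ℝ 𝔤]
    [FiniteDimensional ℝ 𝔤] [LieAlgebra.IsSolvable 𝔤]
    (𝔰₁ 𝔰₂ : LieIdeal ℝ 𝔤)
    (h₁ : ∀ X ∈ 𝔰₁, HasOnlyRealEigenvalues (LieAlgebra.ad ℝ 𝔤 X))
    (h₂ : ∀ X ∈ 𝔰₂, HasOnlyRealEigenvalues (LieAlgebra.ad ℝ 𝔤 X)) :
    ∀ X ∈ 𝔰₁ ⊔ 𝔰₂, HasOnlyRealEigenvalues (LieAlgebra.ad ℝ 𝔤 X) := by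
  have ad_baseChange (X : 𝔤) : (LieAlgebra.ad ℝ 𝔤 X).baseChange ℂ =
      toEnd ℂ (ℂ ⊗[ℝ] 𝔤) (ℂ ⊗[ℝ] 𝔤) (1 ⊗ₜ X) := (toEnd_baseChange ℝ ℂ 𝔤 𝔤 X).symm
  intro X hX μ hμ
  obtain ⟨X₁, hX₁, X₂, hX₂, rfl⟩ := (LieSubmodule.mem_sup _ _ _).1 hX
  rw [ad_baseChange, tmul_add] at hμ
  obtain ⟨a, b, ha, hb, rfl⟩ := exists_hasEigenvalue_add hμ
  rw [← ad_baseChange] at ha hb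
  rw [Complex.add_im, h₁ X₁ hX₁ a ha, h₂ X₂ hX₂ b hb, add_zero]
end

section
/- Let V be a finite-dimensional real vector space, S a skew-symmetric operator (with respect to some inner product) on V, and A an operator commuting with S all of whose complex eigenvalues are real. Set D = S + A. Then ker D = ker S ∩ ker A. -/
open scoped InnerProductSpace
open Polynomial

/-!
On `ker (S + A)` the operators `-S` and `A` agree on the whole `A`-orbit, so every polynomial
in `-S` acts there as the same polynomial in `A`. Since the complex eigenvalues of `A` are real,
its characteristic polynomial splits over `ℝ` as `∏ (X - r)`; by Cayley–Hamilton this product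
of `-S` kills `ker (S + A)`. A skew-symmetric operator has no nonzero real eigenvalue and
satisfies `ker T² = ker T`, so the linear factors can be stripped off one by one: every
`x ∈ ker (S + A)` has `S x = 0`, hence also `A x = 0`.
-/

namespace LinearMap

section Skew

variable {E : Type*} [NormedAddCommGroup E] [InnerProductSpace ℝ E]

def IsSkewSymmetric (T : E →ₗ[ℝ] E) : Prop :=
  ∀ x y, ⟪T x, y⟫_ℝ = -⟪x, T y⟫_ℝ

namespace IsSkewSymmetric

variable {T : E →ₗ[ℝ] E}

theorem neg (hT : T.IsSkewSymmetric) : (-T).IsSkewSymmetric := fun x y => by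
  simp only [neg_apply, inner_neg_left, inner_neg_right, hT x y]

theorem inner_apply_self (hT : T.IsSkewSymmetric) (x : E) : ⟪T x, x⟫_ℝ = 0 := by
  linarith [hT x x, real_inner_comm x (T x)]

theorem eq_zero_of_apply_eq_smul (hT : T.IsSkewSymmetric) {r : ℝ} (hr : r ≠ 0) {x : E}
    (h : T x = r • x) : x = 0 := by
  have h0 := hT.inner_apply_self x
  rw [h, real_inner_smul_left, mul_eq_zero] at h0
  exact inner_self_eq_zero.mp (h0.resolve_left hr)

theorem apply_eq_zero_of_apply_apply_eq_zero (hT : T.IsSkewSymmetric) {x : E}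
    (h : T (T x) = 0) : T x = 0 :=
  inner_self_eq_zero.mp <| by rw [hT, h, inner_zero_right, neg_zero]

theorem ker_aeval_prod_X_sub_C_le_ker (hT : T.IsSkewSymmetric) (s : Multiset ℝ) :
    ker (aeval T (s.map (X - C ·)).prod) ≤ ker T := by
  induction s using Multiset.induction with
  | empty => simp [Module.End.one_eq_id]
  | cons r s ih =>
    intro x hx
    set U := aeval T (s.map (X - C ·)).prod
    have hTU : Commute T U := by simpa only [aeval_X] using (commute_X _).map (aeval T)
    have hUx : T (U x) = r • U x := by
      rw [mem_ker, Multiset.map_cons, Multiset.prod_cons, map_mul, Module.End.mul_apply,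
        map_sub, aeval_X, aeval_C, sub_apply, Module.algebraMap_end_apply, sub_eq_zero] at hx
      exact hx
    by_cases hr : r = 0
    · have hUTx : U (T x) = 0 := by
        rw [← Module.End.mul_apply, ← hTU.eq, Module.End.mul_apply, hUx, hr, zero_smul]
      exact hT.apply_eq_zero_of_apply_apply_eq_zero (ih hUTx)
    · exact ih (hT.eq_zero_of_apply_eq_smul hr hUx)

end IsSkewSymmetric

end Skew

theorem aeval_apply_eq_of_pow_apply_eq {R M : Type*} [CommSemiring R] [AddCommMonoid M]
    [Module R M] {T U : Module.End R M} {x : M} (h : ∀ n : ℕ, (T ^ n) x = (U ^ n) x)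
    (q : R[X]) : aeval T q x = aeval U q x := by
  induction q using Polynomial.induction_on' with
  | add p q hp hq => simp only [map_add, add_apply, hp, hq]
  | monomial n a => simp only [aeval_monomial, Module.End.mul_apply, h n]

theorem neg_pow_apply_eq_pow_apply_of_mem_ker_add {R M : Type*} [CommRing R] [AddCommGroup M]
    [Module R M] {S A : Module.End R M} (hcomm : Commute S A) {x : M}
    (hx : x ∈ ker (S + A)) (n : ℕ) : ((-S) ^ n) x = (A ^ n) x := by
  induction n generalizing x with
  | zero => rfl
  | succ n ih =>
    have hAx : A x ∈ ker (S + A) := by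
      rw [mem_ker, ← Module.End.mul_apply, (hcomm.add_left (Commute.refl A)).eq,
        Module.End.mul_apply, mem_ker.mp hx, map_zero]
    have hSx : (-S) x = A x := by
      rw [neg_apply, neg_eq_iff_add_eq_zero, ← add_apply]
      exact hx
    rw [pow_succ, Module.End.mul_apply, hSx, ih hAx, pow_succ, Module.End.mul_apply]

theorem charpoly_splits_of_hasEigenvalue_baseChange_im_eq_zero {V : Type*} [AddCommGroup V]
    [Module ℝ V] [FiniteDimensional ℝ V] {A : V →ₗ[ℝ] V}
    (hA : ∀ μ : ℂ, Module.End.HasEigenvalue (A.baseChange ℂ) μ → μ.im = 0) :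
    A.charpoly.Splits := by
  refine Splits.of_splits_map_of_injective (algebraMap ℝ ℂ).injective ?_ fun μ hμ => ?_
  · exact IsAlgClosed.splits _
  · rw [← charpoly_baseChange] at hμ
    have hre := hA μ <| (Module.End.hasEigenvalue_iff_isRoot_charpoly _ μ).mpr
      (isRoot_of_mem_roots hμ)
    exact ⟨μ.re, Complex.ext (by simp) (by simp [hre])⟩

end LinearMap

open LinearMap in
/-- Let `S` be a skew-symmetric endomorphism of a finite-dimensional real inner
product space and let `A` be an endomorphism commuting with `S` all of whose
complex eigenvalues are real.  Then `ker (S + A) = ker S ⊓ ker A`. -/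
theorem ker_skew_add_real_eigenvalues
    {V : Type*} [NormedAddCommGroup V] [InnerProductSpace ℝ V] [FiniteDimensional ℝ V]
    (S A : V →ₗ[ℝ] V)
    (hS : ∀ x y : V, ⟪S x, y⟫_ℝ = -⟪x, S y⟫_ℝ)
    (hcomm : Commute S A)
    (hA : ∀ μ : ℂ, Module.End.HasEigenvalue (LinearMap.baseChange ℂ A) μ → μ.im = 0) :
    LinearMap.ker (S + A) = LinearMap.ker S ⊓ LinearMap.ker A := by
  refine le_antisymm (fun x hx => ?_) fun x ⟨hSx, hAx⟩ => by
    rw [mem_ker, LinearMap.add_apply, mem_ker.mp hSx, mem_ker.mp hAx, add_zero]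
  have hAsplit : A.charpoly = (A.charpoly.roots.map (X - C ·)).prod :=
    (charpoly_splits_of_hasEigenvalue_baseChange_im_eq_zero hA).eq_prod_roots_of_monic
      A.charpoly_monic
  have hpx : aeval (-S) A.charpoly x = 0 := by
    rw [aeval_apply_eq_of_pow_apply_eq (neg_pow_apply_eq_pow_apply_of_mem_ker_add hcomm hx),
      aeval_self_charpoly, LinearMap.zero_apply]
  rw [hAsplit] at hpx
  have hSx : S x = 0 :=
    neg_eq_zero.mp <| IsSkewSymmetric.neg hS |>.ker_aeval_prod_X_sub_C_le_ker _ hpx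
  have hAx : A x = 0 := by rwa [mem_ker, LinearMap.add_apply, hSx, zero_add] at hx
  exact ⟨hSx, hAx⟩
end
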